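/- Let 𝒞 be a finite set of constructive, modality-free (propositional) formulas and G = LJ+𝒞. If G is consistent (G does not prove (⇒ ⊥)) and G proves a propositional sequent Γ ⇒ Δ, then Γ ⇒ Δ is classically valid. -/
import Mathlib


set_option autoImplicit false

namespace UPT

/-- Modal formulas over atoms of type `α` (the language `ℒ = {∧,∨,→,⊤,⊥,□,◇}`). -/
inductive Fml (α : Type) : Type where
  | atom : α → Fml α
  | top  : Fml α
  | bot  : Fml α
  | and  : Fml α → Fml α → Fml α
  | or   : Fml α → Fml α → Fml α
  | imp  : Fml α → Fml α → Fml α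
  | box  : Fml α → Fml α
  | dia  : Fml α → Fml α
deriving DecidableEq

variable {α β : Type}

/-- Simultaneous substitution of formulas for atoms. -/
def Fml.subst (σ : β → Fml α) : Fml β → Fml α
  | .atom b  => σ b
  | .top     => .top
  | .bot     => .bot
  | .and A B => .and (A.subst σ) (B.subst σ)
  | .or A B  => .or (A.subst σ) (B.subst σ)
  | .imp A B => .imp (A.subst σ) (B.subst σ)
  | .box A   => .box (A.subst σ)
  | .dia A   => .dia (A.subst σ)

/-- A sequent: a finite multiset antecedent together with a succedent
containing at most one formula. -/
abbrev Seq (α : Type) : Type := Multiset (Fml α) × Option (Fml α)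

/-- A rule set relates a (finite) list of premise sequents to a conclusion sequent. -/
abbrev RuleSet (α : Type) : Type := List (Seq α) → Seq α → Prop

/-- The axioms and rules of the single-conclusion sequent calculus `LJ`, stated
schematically: they are closed under substituting arbitrary formulas for atoms
and arbitrary multisets (resp. succedents) for the context variables. -/
inductive LJRule : List (Seq α) → Seq α → Prop where
  | id (Γ : Multiset (Fml α)) (A : Fml α) : LJRule [] (A ::ₘ Γ, some A)
  | botL (Γ : Multiset (Fml α)) (Δ : Option (Fml α)) : LJRule [] (.bot ::ₘ Γ, Δ)
  | topR (Γ : Multiset (Fml α)) : LJRule [] (Γ, some .top)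
  | wL (A : Fml α) (Γ : Multiset (Fml α)) (Δ : Option (Fml α)) :
      LJRule [(Γ, Δ)] (A ::ₘ Γ, Δ)
  | wR (A : Fml α) (Γ : Multiset (Fml α)) : LJRule [(Γ, none)] (Γ, some A)
  | cL (A : Fml α) (Γ : Multiset (Fml α)) (Δ : Option (Fml α)) :
      LJRule [(A ::ₘ A ::ₘ Γ, Δ)] (A ::ₘ Γ, Δ)
  | cut (A : Fml α) (Γ : Multiset (Fml α)) (Δ : Option (Fml α)) :
      LJRule [(Γ, some A), (A ::ₘ Γ, Δ)] (Γ, Δ)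
  | andL₁ (A B : Fml α) (Γ : Multiset (Fml α)) (Δ : Option (Fml α)) :
      LJRule [(A ::ₘ Γ, Δ)] (.and A B ::ₘ Γ, Δ)
  | andL₂ (A B : Fml α) (Γ : Multiset (Fml α)) (Δ : Option (Fml α)) :
      LJRule [(B ::ₘ Γ, Δ)] (.and A B ::ₘ Γ, Δ)
  | andR (A B : Fml α) (Γ : Multiset (Fml α)) :
      LJRule [(Γ, some A), (Γ, some B)] (Γ, some (.and A B))
  | orL (A B : Fml α) (Γ : Multiset (Fml α)) (Δ : Option (Fml α)) :
      LJRule [(A ::ₘ Γ, Δ), (B ::ₘ Γ, Δ)] (.or A B ::ₘ Γ, Δ)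
  | orR₁ (A B : Fml α) (Γ : Multiset (Fml α)) : LJRule [(Γ, some A)] (Γ, some (.or A B))
  | orR₂ (A B : Fml α) (Γ : Multiset (Fml α)) : LJRule [(Γ, some B)] (Γ, some (.or A B))
  | impL (A B : Fml α) (Γ : Multiset (Fml α)) (Δ : Option (Fml α)) :
      LJRule [(Γ, some A), (B ::ₘ Γ, Δ)] (.imp A B ::ₘ Γ, Δ)
  | impR (A B : Fml α) (Γ : Multiset (Fml α)) :
      LJRule [(A ::ₘ Γ, some B)] (Γ, some (.imp A B))

/-- The rule `K_□`: from `Γ ⇒ A` infer `□Γ ⇒ □A`. -/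
inductive KBoxRule : List (Seq α) → Seq α → Prop where
  | mk (Γ : Multiset (Fml α)) (A : Fml α) :
      KBoxRule [(Γ, some A)] (Γ.map Fml.box, some (.box A))

/-- The rule `K_◇`: from `Γ, A ⇒ B` infer `□Γ, ◇A ⇒ ◇B`. -/
inductive KDiaRule : List (Seq α) → Seq α → Prop where
  | mk (Γ : Multiset (Fml α)) (A B : Fml α) :
      KDiaRule [(A ::ₘ Γ, some B)] (.dia A ::ₘ Γ.map Fml.box, some (.dia B))

/-- The rule `◇L`: from `Γ, A ⇒ B` infer `Γ, ◇A ⇒ ◇B`. -/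
inductive DiaLRule : List (Seq α) → Seq α → Prop where
  | mk (Γ : Multiset (Fml α)) (A B : Fml α) :
      DiaLRule [(A ::ₘ Γ, some B)] (.dia A ::ₘ Γ, some (.dia B))

/-- Adding a set `Ax` of axioms to a calculus: the initial sequents `⇒ σ(A)`
for every substitution instance `σ(A)` of every `A ∈ Ax`. -/
def axRule (Ax : Fml α → Prop) : RuleSet α := fun ps c =>
  ps = [] ∧ ∃ (A : Fml α) (σ : α → Fml α), Ax A ∧ c = ((0 : Multiset (Fml α)), some (A.subst σ))

/-- Using a set of sequents as additional initial sequents (assumptions). -/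
def hypRule (H : Set (Seq α)) : RuleSet α := fun ps c => ps = [] ∧ c ∈ H

/-- The sequent calculus `LJ+Ax`. -/
def LJSys (Ax : Fml α → Prop) : RuleSet α := fun ps c => LJRule ps c ∨ axRule Ax ps c

/-- The sequent calculus `CK+Ax = LJ + K_□ + K_◇ + Ax`. -/
def CKSys (Ax : Fml α → Prop) : RuleSet α := fun ps c =>
  LJRule ps c ∨ KBoxRule ps c ∨ KDiaRule ps c ∨ axRule Ax ps c

/-- The sequent calculus `CK_□+Ax = LJ + K_□ + Ax`. -/
def CKBoxSys (Ax : Fml α → Prop) : RuleSet α := fun ps c =>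
  LJRule ps c ∨ KBoxRule ps c ∨ axRule Ax ps c

/-- The sequent calculus `BLL+Ax = LJ + ◇L + Ax`. -/
def BLLSys (Ax : Fml α → Prop) : RuleSet α := fun ps c =>
  LJRule ps c ∨ DiaLRule ps c ∨ axRule Ax ps c

/-- Provability of a sequent in the calculus generated by a rule set. -/
inductive Derives (R : RuleSet α) : Multiset (Fml α) → Option (Fml α) → Prop where
  | step {ps : List (Seq α)} {c : Seq α} (hr : R ps c)
      (hp : ∀ p ∈ ps, Derives R p.1 p.2) : Derives R c.1 c.2

/-- Basic formulas: generated from atoms, `⊤`, `⊥` by `∧`, `∨`, `◇`. -/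
inductive Basic : Fml α → Prop where
  | atom (a : α) : Basic (.atom a)
  | top : Basic (.top : Fml α)
  | bot : Basic (.bot : Fml α)
  | and {A B : Fml α} : Basic A → Basic B → Basic (.and A B)
  | or {A B : Fml α} : Basic A → Basic B → Basic (.or A B)
  | dia {A : Fml α} : Basic A → Basic (.dia A)

/-- Almost positive formulas: generated from basic formulas by `∧`, `∨`, `□`, `◇`
and implications `A → B` with `A` basic and `B` almost positive. -/
inductive AlmostPos : Fml α → Prop where
  | basic {A : Fml α} : Basic A → AlmostPos A
  | and {A B : Fml α} : AlmostPos A → AlmostPos B → AlmostPos (.and A B)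
  | or {A B : Fml α} : AlmostPos A → AlmostPos B → AlmostPos (.or A B)
  | box {A : Fml α} : AlmostPos A → AlmostPos (.box A)
  | dia {A : Fml α} : AlmostPos A → AlmostPos (.dia A)
  | imp {A B : Fml α} : Basic A → AlmostPos B → AlmostPos (.imp A B)

/-- Constructive formulas: generated from basic formulas by `∧`, `□` and
implications `A → B` with `A` almost positive and `B` constructive. -/
inductive Constructive : Fml α → Prop where
  | basic {A : Fml α} : Basic A → Constructive A
  | and {A B : Fml α} : Constructive A → Constructive B → Constructive (.and A B)
  | box {A : Fml α} : Constructive A → Constructive (.box A)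
  | imp {A B : Fml α} : AlmostPos A → Constructive B → Constructive (.imp A B)

/-- Harrop formulas: atoms, `⊥`, `⊤`, closed under `∧`, `□`, and implications
`A → B` with `A` arbitrary and `B` Harrop. -/
inductive Harrop : Fml α → Prop where
  | atom (a : α) : Harrop (.atom a)
  | top : Harrop (.top : Fml α)
  | bot : Harrop (.bot : Fml α)
  | and {A B : Fml α} : Harrop A → Harrop B → Harrop (.and A B)
  | box {A : Fml α} : Harrop A → Harrop (.box A)
  | imp (A : Fml α) {B : Fml α} : Harrop B → Harrop (.imp A B)

/-- Conjunction of a list of formulas (`⋀∅ = ⊤`). -/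
def conj : List (Fml α) → Fml α
  | [] => .top
  | [A] => A
  | A :: B :: l => .and A (conj (B :: l))

/-- Disjunction of a list of formulas (`⋁∅ = ⊥`). -/
def disj : List (Fml α) → Fml α
  | [] => .bot
  | [A] => A
  | A :: B :: l => .or A (disj (B :: l))

/-- Disjunction of a succedent (at most one formula; `⋁∅ = ⊥`). -/
def odisj : Option (Fml α) → Fml α
  | none => .bot
  | some A => A

/-- The multiset `{A_i → B_i}_{i ∈ I}` of implications of an indexed family. -/
def imps (AB : List (Fml α × Fml α)) : Multiset (Fml α) :=
  ↑(AB.map fun p => Fml.imp p.1 p.2)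

/-- The conjunction `⋀_{i∈I} (A_i → B_i)` of an indexed family of implications. -/
def impConj (AB : List (Fml α × Fml α)) : Fml α :=
  conj (AB.map fun p => Fml.imp p.1 p.2)

/-- Truth in the one-node *irreflexive* frame `𝒦ᵢ` under a Boolean valuation:
`□A` is always true and `◇A` is always false; the propositional connectives
are evaluated classically. -/
def evalI (v : α → Bool) : Fml α → Bool
  | .atom a  => v a
  | .top     => true
  | .bot     => false
  | .and A B => evalI v A && evalI v B
  | .or A B  => evalI v A || evalI v B
  | .imp A B => !evalI v A || evalI v B
  | .box _   => true
  | .dia _   => false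

/-- Truth in the one-node *reflexive* frame `𝒦ᵣ` under a Boolean valuation:
`□A` and `◇A` take the value of `A`. -/
def evalR (v : α → Bool) : Fml α → Bool
  | .atom a  => v a
  | .top     => true
  | .bot     => false
  | .and A B => evalR v A && evalR v B
  | .or A B  => evalR v A || evalR v B
  | .imp A B => !evalR v A || evalR v B
  | .box A   => evalR v A
  | .dia A   => evalR v A

/-- Validity of a sequent with respect to a one-node semantics: under every
valuation, if all formulas of the antecedent are true then so is the succedent. -/
def SeqValid (ev : (α → Bool) → Fml α → Bool) (Γ : Multiset (Fml α)) (Δ : Option (Fml α)) :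
    Prop :=
  ∀ v : α → Bool, (∀ A ∈ Γ, ev v A = true) → ∃ B ∈ Δ, ev v B = true

/-- `CK+Ax` is T-free: every provable sequent is valid in the irreflexive node frame. -/
def TFree (Ax : Fml α → Prop) : Prop :=
  ∀ (Γ : Multiset (Fml α)) (Δ : Option (Fml α)), Derives (CKSys Ax) Γ Δ → SeqValid evalI Γ Δ

/-- `CK+Ax` is T-full: every provable sequent is valid in the reflexive node
frame and the calculus proves `⇒ □p → p` and `⇒ p → ◇p`. -/
def TFull (Ax : Fml α → Prop) : Prop :=
  (∀ (Γ : Multiset (Fml α)) (Δ : Option (Fml α)), Derives (CKSys Ax) Γ Δ → SeqValid evalR Γ Δ) ∧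
  (∀ a : α, Derives (CKSys Ax) 0 (some (.imp (.box (.atom a)) (.atom a)))) ∧
  (∀ a : α, Derives (CKSys Ax) 0 (some (.imp (.atom a) (.dia (.atom a)))))

/-- Classical validity of a (modality-free) sequent: `⋀Γ → ⋁Δ` is true under
every Boolean valuation of the atoms. -/
def ClValid (Γ : Multiset (Fml α)) (Δ : Option (Fml α)) : Prop :=
  ∀ v : α → Bool, (∀ A ∈ Γ, evalI v A = true) → ∃ B ∈ Δ, evalI v B = true

/-- Nonempty conjunctions of atoms. -/
inductive AtomConj : Fml α → Prop where
  | single (a : α) : AtomConj (.atom a)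
  | and {A B : Fml α} : AtomConj A → AtomConj B → AtomConj (.and A B)

/-- Implicational Horn formulas: `⊥`, atoms, and implications `⋀Q → r` with `Q`
a nonempty multiset of atoms and `r` an atom or `⊥`. -/
inductive ImpHorn : Fml α → Prop where
  | bot : ImpHorn (.bot : Fml α)
  | atom (a : α) : ImpHorn (.atom a)
  | impAtom {A : Fml α} (hA : AtomConj A) (a : α) : ImpHorn (.imp A (.atom a))
  | impBot {A : Fml α} (hA : AtomConj A) : ImpHorn (.imp A .bot)

/-- Formulas of the form `◇^n p` with `p` an atom and `n ≥ 0`. -/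
inductive DiaPowAtom : Fml α → Prop where
  | atom (a : α) : DiaPowAtom (.atom a)
  | dia {A : Fml α} : DiaPowAtom A → DiaPowAtom (.dia A)

/-- Nonempty conjunctions `⋀_{i=1}^k ◇^{n_i} p_i` of formulas `◇^{n_i} p_i`. -/
inductive DiaConj : Fml α → Prop where
  | single {A : Fml α} : DiaPowAtom A → DiaConj A
  | and {A B : Fml α} : DiaConj A → DiaConj B → DiaConj (.and A B)

/-- Modal Horn formulas: `⊥` and atoms, closed under `□` and under implications
`A → B` with `A = ⋀_{i=1}^k ◇^{n_i} p_i` and `B` modal Horn. -/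
inductive ModalHorn : Fml α → Prop where
  | bot : ModalHorn (.bot : Fml α)
  | atom (a : α) : ModalHorn (.atom a)
  | box {A : Fml α} : ModalHorn A → ModalHorn (.box A)
  | imp {A B : Fml α} : DiaConj A → ModalHorn B → ModalHorn (.imp A B)

/-- The predicate "all atoms of the formula satisfy `P`". -/
def Fml.AtomsIn (P : α → Prop) : Fml α → Prop
  | .atom a  => P a
  | .top     => True
  | .bot     => True
  | .and A B => A.AtomsIn P ∧ B.AtomsIn P
  | .or A B  => A.AtomsIn P ∧ B.AtomsIn P
  | .imp A B => A.AtomsIn P ∧ B.AtomsIn P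
  | .box A   => A.AtomsIn P
  | .dia A   => A.AtomsIn P

/-- No `◇` occurs in the formula. -/
def Fml.DiaFree : Fml α → Prop
  | .atom _  => True
  | .top     => True
  | .bot     => True
  | .and A B => A.DiaFree ∧ B.DiaFree
  | .or A B  => A.DiaFree ∧ B.DiaFree
  | .imp A B => A.DiaFree ∧ B.DiaFree
  | .box A   => A.DiaFree
  | .dia _   => False

/-- No `□` occurs in the formula. -/
def Fml.BoxFree : Fml α → Prop
  | .atom _  => True
  | .top     => True
  | .bot     => True
  | .and A B => A.BoxFree ∧ B.BoxFree
  | .or A B  => A.BoxFree ∧ B.BoxFree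
  | .imp A B => A.BoxFree ∧ B.BoxFree
  | .box _   => False
  | .dia A   => A.BoxFree

/-- The formula is modality-free (propositional). -/
def Fml.ModFree : Fml α → Prop
  | .atom _  => True
  | .top     => True
  | .bot     => True
  | .and A B => A.ModFree ∧ B.ModFree
  | .or A B  => A.ModFree ∧ B.ModFree
  | .imp A B => A.ModFree ∧ B.ModFree
  | .box _   => False
  | .dia _   => False

/-- An angling of the language: an injection `φ ↦ ⟨φ⟩` from formulas into the
atoms whose image (the angled atoms) is disjoint from a fixed infinite set of
plain atoms. -/
structure Angling (α : Type) where
  angle : Fml α → α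
  plain : Set α
  inj : Function.Injective angle
  plain_infinite : plain.Infinite
  disjoint : ∀ φ : Fml α, angle φ ∉ plain

/-- `a` is an angled atom. -/
def Angling.Angled (S : Angling α) (a : α) : Prop := ∃ φ : Fml α, S.angle φ = a

/-- The translation `t`: `⊥^t = ⊥`, `p^t = ⟨p⟩`, `⊤^t = ⟨⊤⟩`,
`(A ∘ B)^t = (A^t ∘ B^t) ∧ ⟨A ∘ B⟩` and `(○A)^t = (○A^t) ∧ ⟨○A⟩`. -/
def Angling.tr (S : Angling α) : Fml α → Fml α
  | .atom a  => .atom (S.angle (.atom a))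
  | .top     => .atom (S.angle .top)
  | .bot     => .bot
  | .and A B => .and (.and (S.tr A) (S.tr B)) (.atom (S.angle (.and A B)))
  | .or A B  => .and (.or (S.tr A) (S.tr B)) (.atom (S.angle (.or A B)))
  | .imp A B => .and (.imp (S.tr A) (S.tr B)) (.atom (S.angle (.imp A B)))
  | .box A   => .and (.box (S.tr A)) (.atom (S.angle (.box A)))
  | .dia A   => .and (.dia (S.tr A)) (.atom (S.angle (.dia A)))

/-- Action of the standard substitution on atoms: an angled atom `⟨φ⟩` is sent
to `φ`; plain atoms are fixed. -/
noncomputable def Angling.stdAtom (S : Angling α) (a : α) : Fml α :=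
  haveI := Classical.propDecidable (∃ φ : Fml α, S.angle φ = a)
  if h : ∃ φ : Fml α, S.angle φ = a then h.choose else .atom a

/-- The standard substitution `s`: replaces each angled atom `⟨φ⟩` by `φ`,
fixes the plain atoms, and commutes with all connectives. -/
noncomputable def Angling.std (S : Angling α) : Fml α → Fml α :=
  Fml.subst S.stdAtom

/-- The Visser–Harrop property of a calculus. -/
def VisserHarrop (R : RuleSet α) : Prop :=
  ∀ (Γ : Multiset (Fml α)), (∀ A ∈ Γ, Harrop A) →
  ∀ (AB : List (Fml α × Fml α)) (C D : Fml α),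
    Derives R (Γ + imps AB) (some (.or C D)) →
    Derives R (Γ + imps AB) (some C) ∨
    Derives R (Γ + imps AB) (some D) ∨
    ∃ p ∈ AB, Derives R (Γ + imps AB) (some p.1)

/-- The disjunction property of a calculus. -/
def DisjProp (R : RuleSet α) : Prop :=
  ∀ C D : Fml α, Derives R 0 (some (.or C D)) →
    Derives R 0 (some C) ∨ Derives R 0 (some D)

/-- The formula interpretation `I(Γ ⇒ Δ) = ⋀Γ → ⋁Δ` belongs to `L` (stated for
every enumeration of the antecedent multiset as a list). -/
def interpIn (L : Set (Fml α)) (s : Seq α) : Prop :=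
  ∀ l : List (Fml α), (↑l : Multiset (Fml α)) = s.1 → Fml.imp (conj l) (odisj s.2) ∈ L

/- Named modal axioms (with `p := atom 0`, `q := atom 1`). -/
def axTa : Fml ℕ := .imp (.box (.atom 0)) (.atom 0)
def axTb : Fml ℕ := .imp (.atom 0) (.dia (.atom 0))
def axBa : Fml ℕ := .imp (.dia (.box (.atom 0))) (.atom 0)
def axBb : Fml ℕ := .imp (.atom 0) (.box (.dia (.atom 0)))
def ax4a : Fml ℕ := .imp (.box (.atom 0)) (.box (.box (.atom 0)))
def ax4b : Fml ℕ := .imp (.dia (.dia (.atom 0))) (.dia (.atom 0))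
def ax5a : Fml ℕ := .imp (.dia (.box (.atom 0))) (.box (.atom 0))
def ax5b : Fml ℕ := .imp (.dia (.atom 0)) (.box (.dia (.atom 0)))
def axDiaBot : Fml ℕ := .imp (.dia .bot) .bot
def axDiaOr : Fml ℕ :=
  .imp (.dia (.or (.atom 0) (.atom 1))) (.or (.dia (.atom 0)) (.dia (.atom 1)))
def axBoxImp : Fml ℕ :=
  .imp (.imp (.dia (.atom 0)) (.box (.atom 1))) (.box (.imp (.atom 0) (.atom 1)))

/-- The axioms of `X ⊆ {T, B, 4, 5}` in both their `a`- and `b`-versions. -/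
def XAxioms (tT tB t4 t5 : Bool) : Set (Fml ℕ) :=
  (if tT then ({axTa, axTb} : Set (Fml ℕ)) else ∅) ∪
  (if tB then ({axBa, axBb} : Set (Fml ℕ)) else ∅) ∪
  (if t4 then ({ax4a, ax4b} : Set (Fml ℕ)) else ∅) ∪
  (if t5 then ({ax5a, ax5b} : Set (Fml ℕ)) else ∅)

/-- The additional axioms of `IK` over `CK`. -/
def IKExtra : Set (Fml ℕ) := {axDiaBot, axDiaOr, axBoxImp}

/-- The right rule with premises `{Γ, φ̄_i ⇒ ψ̄_i}_{i∈I}` and conclusion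
`Γ, θ̄ ⇒ η̄`, closed under all substitutions of formulas for atoms and
multisets for the context `Γ`. -/
def rightRuleInst (prems : List (List (Fml α) × Option (Fml α)))
    (θ : List (Fml α)) (η : Option (Fml α)) : RuleSet α := fun ps c =>
  ∃ (σ : α → Fml α) (Γ : Multiset (Fml α)),
    ps = prems.map (fun pr =>
        ((Γ + ↑(pr.1.map (Fml.subst σ)) : Multiset (Fml α)), pr.2.map (Fml.subst σ))) ∧
    c = ((Γ + ↑(θ.map (Fml.subst σ)) : Multiset (Fml α)), η.map (Fml.subst σ))

/-- The left rule with premises `{Γ, φ̄_i ⇒ ψ̄_i}_{i∈I} ∪ {Γ, θ̄_j ⇒ Δ}_{j∈J}`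
and conclusion `Γ, η̄ ⇒ Δ`, closed under all substitutions of formulas for
atoms and multisets for `Γ` and `Δ`. -/
def leftRuleInst (prems : List (List (Fml α) × Option (Fml α)))
    (lefts : List (List (Fml α))) (η : List (Fml α)) : RuleSet α := fun ps c =>
  ∃ (σ : α → Fml α) (Γ : Multiset (Fml α)) (Δ : Option (Fml α)),
    ps = prems.map (fun pr =>
          ((Γ + ↑(pr.1.map (Fml.subst σ)) : Multiset (Fml α)), pr.2.map (Fml.subst σ)))
        ++ lefts.map (fun θj => ((Γ + ↑(θj.map (Fml.subst σ)) : Multiset (Fml α)), Δ)) ∧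
    c = ((Γ + ↑(η.map (Fml.subst σ)) : Multiset (Fml α)), Δ)

/-- The formula `Ax_R` of a right rule. -/
def AxRight (prems : List (List (Fml α) × Option (Fml α)))
    (θ : List (Fml α)) (η : Option (Fml α)) : Fml α :=
  .imp (.and (conj (prems.map fun pr => .imp (conj pr.1) (odisj pr.2))) (conj θ)) (odisj η)

/-- The formula `Ax_R` of a left rule. -/
def AxLeft (prems : List (List (Fml α) × Option (Fml α)))
    (lefts : List (List (Fml α))) (η : List (Fml α)) : Fml α :=
  .imp (.and (conj (prems.map fun pr => .imp (conj pr.1) (odisj pr.2))) (conj η))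
    (disj (lefts.map conj))

/-- The forgetful translation `f_i`: fixes atoms, `⊤`, `⊥`, commutes with
`∧`, `∨`, `→`, `□`, and sends every `◇A` to `⊥`. -/
def fi : Fml α → Fml α
  | .atom a  => .atom a
  | .top     => .top
  | .bot     => .bot
  | .and A B => .and (fi A) (fi B)
  | .or A B  => .or (fi A) (fi B)
  | .imp A B => .imp (fi A) (fi B)
  | .box A   => .box (fi A)
  | .dia _   => .bot

/-- The forgetful translation `f_r`: fixes atoms, `⊤`, `⊥`, commutes with
`∧`, `∨`, `→`, `□`, and sends `◇A` to `f_r A`. -/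
def fr : Fml α → Fml α
  | .atom a  => .atom a
  | .top     => .top
  | .bot     => .bot
  | .and A B => .and (fr A) (fr B)
  | .or A B  => .or (fr A) (fr B)
  | .imp A B => .imp (fr A) (fr B)
  | .box A   => .box (fr A)
  | .dia A   => fr A


lemma evalI_subst (v : α → Bool) (σ : α → Fml α) :
    ∀ B : Fml α, evalI v (B.subst σ) = evalI (fun a => evalI v (σ a)) B := by
  intro B; induction B <;> simp [Fml.subst, evalI, *]

/-- Soundness of `LJ+Ax` under a fixed Boolean valuation under which all axiom
instances are true. -/
lemma lj_sound {Ax : Fml α → Prop} (v : α → Bool)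
    (hax : ∀ (A : Fml α) (σ : α → Fml α), Ax A → evalI v (A.subst σ) = true)
    {Γ : Multiset (Fml α)} {Δ : Option (Fml α)}
    (h : Derives (LJSys Ax) Γ Δ) :
    (∀ A ∈ Γ, evalI v A = true) → ∃ B ∈ Δ, evalI v B = true := by
  induction h with
  | step hr hp ih =>
    rcases hr with hr | ⟨hps, A, σ, hA, hc⟩
    · cases hr with
      | id Γ A =>
        intro hΓ; exact ⟨A, rfl, hΓ A (Multiset.mem_cons_self ..)⟩
      | botL Γ Δ =>
        intro hΓ; simpa [evalI] using hΓ _ (Multiset.mem_cons_self ..)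
      | topR Γ =>
        intro _; exact ⟨.top, rfl, rfl⟩
      | wL A Γ Δ =>
        intro hΓ
        exact ih (Γ, Δ) (by simp) fun B hB => hΓ B (Multiset.mem_cons_of_mem hB)
      | wR A Γ =>
        intro hΓ
        rcases ih (Γ, none) (by simp) hΓ with ⟨B, hB, _⟩
        exact absurd hB (by simp)
      | cL A Γ Δ =>
        intro hΓ
        refine ih (A ::ₘ A ::ₘ Γ, Δ) (by simp) fun B hB => ?_
        rcases Multiset.mem_cons.1 hB with rfl | hB
        · exact hΓ B (Multiset.mem_cons_self ..)
        · exact hΓ B hB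
      | cut A Γ Δ =>
        intro hΓ
        rcases ih (Γ, some A) (by simp) hΓ with ⟨B, hB, hBv⟩
        have hBA : B = A := by simpa using hB.symm
        refine ih (A ::ₘ Γ, Δ) (by simp) fun C hC => ?_
        rcases Multiset.mem_cons.1 hC with rfl | hC
        · exact hBA ▸ hBv
        · exact hΓ C hC
      | andL₁ A B Γ Δ =>
        intro hΓ
        have hab := hΓ _ (Multiset.mem_cons_self ..)
        simp only [evalI, Bool.and_eq_true] at hab
        refine ih (A ::ₘ Γ, Δ) (by simp) fun C hC => ?_
        rcases Multiset.mem_cons.1 hC with rfl | hC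
        · exact hab.1
        · exact hΓ C (Multiset.mem_cons_of_mem hC)
      | andL₂ A B Γ Δ =>
        intro hΓ
        have hab := hΓ _ (Multiset.mem_cons_self ..)
        simp only [evalI, Bool.and_eq_true] at hab
        refine ih (B ::ₘ Γ, Δ) (by simp) fun C hC => ?_
        rcases Multiset.mem_cons.1 hC with rfl | hC
        · exact hab.2
        · exact hΓ C (Multiset.mem_cons_of_mem hC)
      | andR A B Γ =>
        intro hΓ
        rcases ih (Γ, some A) (by simp) hΓ with ⟨C, hC, hCv⟩
        rcases ih (Γ, some B) (by simp) hΓ with ⟨D, hD, hDv⟩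
        have hCA : C = A := by simpa using hC.symm
        have hDB : D = B := by simpa using hD.symm
        refine ⟨.and A B, rfl, ?_⟩
        simp only [evalI, Bool.and_eq_true]
        exact ⟨hCA ▸ hCv, hDB ▸ hDv⟩
      | orL A B Γ Δ =>
        intro hΓ
        have hab := hΓ _ (Multiset.mem_cons_self ..)
        simp only [evalI, Bool.or_eq_true] at hab
        rcases hab with hA | hB
        · refine ih (A ::ₘ Γ, Δ) (by simp) fun C hC => ?_
          rcases Multiset.mem_cons.1 hC with rfl | hC
          · exact hA
          · exact hΓ C (Multiset.mem_cons_of_mem hC)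
        · refine ih (B ::ₘ Γ, Δ) (by simp) fun C hC => ?_
          rcases Multiset.mem_cons.1 hC with rfl | hC
          · exact hB
          · exact hΓ C (Multiset.mem_cons_of_mem hC)
      | orR₁ A B Γ =>
        intro hΓ
        rcases ih (Γ, some A) (by simp) hΓ with ⟨C, hC, hCv⟩
        have hCA : C = A := by simpa using hC.symm
        refine ⟨.or A B, rfl, ?_⟩
        simp only [evalI, Bool.or_eq_true]
        exact Or.inl (hCA ▸ hCv)
      | orR₂ A B Γ =>
        intro hΓ
        rcases ih (Γ, some B) (by simp) hΓ with ⟨C, hC, hCv⟩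
        have hCB : C = B := by simpa using hC.symm
        refine ⟨.or A B, rfl, ?_⟩
        simp only [evalI, Bool.or_eq_true]
        exact Or.inr (hCB ▸ hCv)
      | impL A B Γ Δ =>
        intro hΓ
        have himp := hΓ _ (Multiset.mem_cons_self ..)
        rcases ih (Γ, some A) (by simp) (fun C hC => hΓ C (Multiset.mem_cons_of_mem hC)) with ⟨C, hC, hCv⟩
        have hCA : C = A := by simpa using hC.symm
        rw [hCA] at hCv
        simp only [evalI, hCv, Bool.not_true, Bool.false_or] at himp
        refine ih (B ::ₘ Γ, Δ) (by simp) fun D hD => ?_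
        rcases Multiset.mem_cons.1 hD with rfl | hD
        · exact himp
        · exact hΓ D (Multiset.mem_cons_of_mem hD)
      | impR A B Γ =>
        intro hΓ
        by_cases hA : evalI v A = true
        · rcases ih (A ::ₘ Γ, some B) (by simp) (fun C hC => by
            rcases Multiset.mem_cons.1 hC with rfl | hC
            · exact hA
            · exact hΓ C hC) with ⟨D, hD, hDv⟩
          have hDB : D = B := by simpa using hD.symm
          refine ⟨.imp A B, rfl, ?_⟩
          simp only [evalI, Bool.or_eq_true]
          exact Or.inr (hDB ▸ hDv)
        · exact ⟨.imp A B, rfl, by simp [evalI, Bool.not_eq_true] at hA ⊢; simp [hA]⟩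
    · intro _
      subst hc
      exact ⟨A.subst σ, rfl, hax A σ hA⟩

lemma lj_step0 {Ax : Fml α → Prop} {c : Seq α} (hr : LJRule [] c) :
    Derives (LJSys Ax) c.1 c.2 :=
  Derives.step (Or.inl hr) (by simp)

lemma lj_step1 {Ax : Fml α → Prop} {p c : Seq α} (hr : LJRule [p] c)
    (h : Derives (LJSys Ax) p.1 p.2) : Derives (LJSys Ax) c.1 c.2 :=
  Derives.step (Or.inl hr) (by
    intro q hq
    simp only [List.mem_singleton] at hq
    subst hq; exact h)

lemma lj_step2 {Ax : Fml α → Prop} {p₁ p₂ c : Seq α} (hr : LJRule [p₁, p₂] c)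
    (h₁ : Derives (LJSys Ax) p₁.1 p₁.2) (h₂ : Derives (LJSys Ax) p₂.1 p₂.2) :
    Derives (LJSys Ax) c.1 c.2 :=
  Derives.step (Or.inl hr) (by
    intro q hq
    simp only [List.mem_cons, List.not_mem_nil, or_false] at hq
    rcases hq with rfl | rfl
    · exact h₁
    · exact h₂)

lemma ax_step {Ax : Fml α → Prop} {A : Fml α} (σ : α → Fml α) (hA : Ax A) :
    Derives (LJSys Ax) 0 (some (A.subst σ)) :=
  Derives.step (R := LJSys Ax) (ps := []) (c := ((0 : Multiset (Fml α)), some (A.subst σ)))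
    (Or.inr ⟨rfl, A, σ, hA, rfl⟩) (by simp)

/-- Decidability of closed (constant-substituted) modality-free formulas in `LJ`:
the substitution sending each atom to its truth value makes each formula
provable or refutable. -/
lemma const_decide {Ax : Fml α → Prop} (w : α → Bool) :
    ∀ B : Fml α, B.ModFree →
      (evalI w B = true →
        ∀ Γ : Multiset (Fml α),
          Derives (LJSys Ax) Γ (some (B.subst fun a => if w a then .top else .bot))) ∧
      (evalI w B = false →
        ∀ (Γ : Multiset (Fml α)) (Δ : Option (Fml α)),
          Derives (LJSys Ax) ((B.subst fun a => if w a then .top else .bot) ::ₘ Γ) Δ) := by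
  intro B hB
  induction B with
  | atom a =>
    constructor
    · intro h Γ
      simp only [evalI] at h
      simp only [Fml.subst, h, if_true]
      exact lj_step0 (LJRule.topR Γ)
    · intro h Γ Δ
      simp only [evalI] at h
      simp only [Fml.subst, h, if_false]
      exact lj_step0 (LJRule.botL Γ Δ)
  | top =>
    exact ⟨fun _ Γ => lj_step0 (LJRule.topR Γ), fun h => by simp [evalI] at h⟩
  | bot =>
    exact ⟨fun h => by simp [evalI] at h, fun _ Γ Δ => lj_step0 (LJRule.botL Γ Δ)⟩
  | and C D ihC ihD =>
    obtain ⟨hC, hD⟩ := hB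
    have ihC := ihC hC; have ihD := ihD hD
    constructor
    · intro h Γ
      simp only [evalI, Bool.and_eq_true] at h
      exact lj_step2 (LJRule.andR _ _ Γ) (ihC.1 h.1 Γ) (ihD.1 h.2 Γ)
    · intro h Γ Δ
      simp only [evalI, Bool.and_eq_false_iff] at h
      rcases h with h | h
      · exact lj_step1 (LJRule.andL₁ _ _ Γ Δ) (ihC.2 h Γ Δ)
      · exact lj_step1 (LJRule.andL₂ _ _ Γ Δ) (ihD.2 h Γ Δ)
  | or C D ihC ihD =>
    obtain ⟨hC, hD⟩ := hB
    have ihC := ihC hC; have ihD := ihD hD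
    constructor
    · intro h Γ
      simp only [evalI, Bool.or_eq_true] at h
      rcases h with h | h
      · exact lj_step1 (LJRule.orR₁ _ _ Γ) (ihC.1 h Γ)
      · exact lj_step1 (LJRule.orR₂ _ _ Γ) (ihD.1 h Γ)
    · intro h Γ Δ
      simp only [evalI, Bool.or_eq_false_iff] at h
      exact lj_step2 (LJRule.orL _ _ Γ Δ) (ihC.2 h.1 Γ Δ) (ihD.2 h.2 Γ Δ)
  | imp C D ihC ihD =>
    obtain ⟨hC, hD⟩ := hB
    have ihC := ihC hC; have ihD := ihD hD
    constructor
    · intro h Γ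
      simp only [evalI, Bool.or_eq_true, Bool.not_eq_true'] at h
      refine lj_step1 (LJRule.impR _ _ Γ) ?_
      rcases h with h | h
      · exact ihC.2 h Γ _
      · exact ihD.1 h _
    · intro h Γ Δ
      simp only [evalI, Bool.or_eq_false_iff, Bool.not_eq_false'] at h
      exact lj_step2 (LJRule.impL _ _ Γ Δ) (ihC.1 h.1 Γ) (ihD.2 h.2 Γ Δ)
  | box C ih => exact absurd hB (by simp [Fml.ModFree])
  | dia C ih => exact absurd hB (by simp [Fml.ModFree])

/-- if `G = LJ+𝒞` (`𝒞` finite, constructive and modality-free)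
is consistent and proves a propositional sequent `Γ ⇒ Δ`, then `Γ ⇒ Δ` is
classically valid. -/
theorem statement_14 (CS : Finset (Fml ℕ)) (hCS : ∀ A ∈ CS, Constructive A ∧ A.ModFree)
    (hcons : ¬ Derives (LJSys (· ∈ CS)) 0 (some .bot))
    (Γ : Multiset (Fml ℕ)) (Δ : Option (Fml ℕ))
    (hΓ : ∀ A ∈ Γ, A.ModFree) (hΔ : ∀ B ∈ Δ, B.ModFree)
    (h : Derives (LJSys (· ∈ CS)) Γ Δ) :
    ClValid Γ Δ := by
  have taut : ∀ A ∈ CS, ∀ w : ℕ → Bool, evalI w A = true := by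
    intro A hA w
    by_contra hfalse
    have hf : evalI w A = false := by
      cases hwA : evalI w A
      · rfl
      · exact absurd hwA hfalse
    have h1 : Derives (LJSys (· ∈ CS)) 0
        (some (A.subst fun a => if w a then .top else .bot)) :=
      ax_step _ hA
    have h2 : Derives (LJSys (· ∈ CS))
        ((A.subst fun a => if w a then .top else .bot) ::ₘ 0) (some .bot) :=
      (const_decide w A (hCS A hA).2).2 hf 0 (some .bot)
    exact hcons (lj_step2
      (LJRule.cut (A.subst fun a => if w a then .top else .bot) 0 (some .bot)) h1 h2)
  intro v hv
  refine lj_sound v ?_ h hv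
  intro A σ hA
  rw [evalI_subst]
  exact taut A hA _

end UPT
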